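/- Let m ≥ 1 and let X = ℝ^m with its usual topology, and endow the space C(X) of continuous self-maps of X with the compact-open topology. Then every non-empty open subset of C(X) contains a continuous map f : X → X such that for every n ≥ 2 there is no map g : X → X (not even a discontinuous one) with gⁿ = f. -/

import Mathlib

/-!
A root `g` of `f` commutes with `f`, so it maps fixed points to fixed points and preimage chains
to preimage chains. This is impossible for `g p` if `f` fixes `p`, `f⁻¹{p} = {p, x₁}`,
`f⁻¹{x₁} = {x₂}`, and every other fixed point ends two disjoint preimage chains of length two.

An open set of `C(E, E)` containing `h` contains every continuous map agreeing with `h` on some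
compact set. Take a functional `ℓ` and `e` with `ℓ e = 1`, scaled so that this compact set and the
values of a cut-off of `h` lie in the slab `|ℓ| ≤ 1`, and outside `|ℓ| ≤ 9` send `s • e + w`
(with `ℓ w = 0`) to `profile s • e + w / 2`. There the profile is the translation by `∓ 10`,
which supplies the preimages of the fixed points in the slab, except for a tent around `s = 50`
creating `p = 50 • e`, `x₁ = 60 • e`, `x₂ = 70 • e`; halving `w` makes the preimages of `p` and
`x₁` unique.
-/

open Function Set

theorem iterate_ne_of_fixedPt_preimages {X : Type*} {f : X → X} {p x₁ x₂ : X}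
    (hp : f p = p) (hx₁ : f x₁ = p) (hx₂ : f x₂ = x₁) (hx₁p : x₁ ≠ p)
    (hpre_p : ∀ z, f z = p → z = p ∨ z = x₁) (hpre_x₁ : ∀ z, f z = x₁ → z = x₂)
    (hfix : ∀ q, f q = q → q ≠ p → ∃ v₁ v₂ u₁ u₂, f v₁ = q ∧ f v₂ = q ∧ f u₁ = v₁ ∧
      f u₂ = v₂ ∧ v₁ ≠ v₂ ∧ v₁ ≠ q ∧ v₂ ≠ q)
    {n : ℕ} (hn : 2 ≤ n) (g : X → X) : g^[n] ≠ f := by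
  intro hg
  obtain ⟨k, rfl⟩ : ∃ k, n = k + 2 := ⟨n - 2, by omega⟩
  have hg_comm : Function.Commute g f := hg ▸ Function.Commute.self_iterate g (k + 2)
  have ha_comm : Function.Commute g^[k + 1] f := hg_comm.iterate_left (k + 1)
  have hga : ∀ z, g (g^[k + 1] z) = f z := fun z => by rw [← hg, iterate_succ_apply' g (k + 1)]
  have hgx₂ : f (g x₂) = g x₁ := by rw [← hg_comm x₂, hx₂]
  by_cases hgp : g p = p
  · have hgx₁ : g x₁ = p := by
      refine (hpre_p _ (by rw [← hg_comm x₁, hx₁, hgp])).resolve_right fun h => hx₁p ?_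
      rw [← hx₁, ← hg, iterate_fixed h]
    have hggx₂ : g (g x₂) = p := by
      rcases hpre_p _ (by rw [hgx₂, hgx₁]) with h | h <;> rw [h] <;> assumption
    refine hx₁p ?_
    rw [← hx₂, ← hg]
    change g^[k] (g (g x₂)) = p
    rw [hggx₂, iterate_fixed hgp]
  · obtain ⟨v₁, v₂, u₁, u₂, hv₁, hv₂, hu₁, hu₂, hv₁₂, hv₁q, hv₂q⟩ :=
      hfix (g p) (by rw [← hg_comm p, hp]) hgp
    -- `g^[k+1]` maps each preimage of `g p` to a preimage of `p`, and `g` undoes this shift.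
    have key : ∀ v u, f v = g p → f u = v → v ≠ g p → v = g x₁ ∨ v = g x₂ := by
      intro v u hv hu hvq
      have hav : f (g^[k + 1] v) = p := by
        rw [← ha_comm v, hv, ← iterate_succ_apply, hg, hp]
      have hau : f (g^[k + 1] u) = g^[k + 1] v := by rw [← ha_comm u, hu]
      have hv_eq : v = g (g^[k + 1] u) := by rw [hga, hu]
      rcases hpre_p _ hav with h | h <;> rw [h] at hau
      · rcases hpre_p _ hau with h' | h' <;> rw [h'] at hv_eq
        · exact absurd hv_eq hvq
        · exact Or.inl hv_eq
      · exact Or.inr (by rw [hv_eq, hpre_x₁ _ hau])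
    rcases key v₁ u₁ hv₁ hu₁ hv₁q with rfl | rfl <;>
      rcases key v₂ u₂ hv₂ hu₂ hv₂q with rfl | rfl
    · exact hv₁₂ rfl
    · exact hv₁q (by rw [← hgx₂, hv₂])
    · exact hv₂q (by rw [← hgx₂, hv₁])
    · exact hv₁₂ rfl

theorem ContinuousMap.exists_isCompact_forall_eqOn_mem {X Y : Type*} [TopologicalSpace X]
    [TopologicalSpace Y] {s : Set C(X, Y)} {h : C(X, Y)} (hs : s ∈ nhds h) :
    ∃ K, IsCompact K ∧ ∀ f : C(X, Y), EqOn f h K → f ∈ s := by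
  obtain ⟨S, hS, hSh, hSs⟩ := ContinuousMap.mem_nhds_iff.1 hs
  refine ⟨⋃ KU ∈ S, KU.1, hS.isCompact_biUnion fun KU hKU => (hSh _ _ hKU).1,
    fun f hf => hSs fun K U hKU x hx => ?_⟩
  rw [hf (mem_biUnion hKU hx)]
  exact (hSh K U hKU).2.2 hx

theorem exists_dual_apply_eq_one_abs_apply_le {E : Type*} [NormedAddCommGroup E]
    [NormedSpace ℝ E] [Nontrivial E] {M : ℝ} (hM : 0 < M) :
    ∃ ℓ : StrongDual ℝ E, ∃ e : E, ℓ e = 1 ∧ ∀ x, |ℓ x| ≤ ‖x‖ / M := by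
  obtain ⟨x₀, hx₀⟩ := exists_ne (0 : E)
  obtain ⟨ℓ₀, hℓ₀, hℓ₀x₀⟩ := exists_dual_vector ℝ x₀ (norm_ne_zero_iff.2 hx₀)
  refine ⟨M⁻¹ • ℓ₀, (M / ‖x₀‖) • x₀, ?_, fun x => ?_⟩
  · simp only [smul_apply, map_smul, hℓ₀x₀, RCLike.ofReal_real_eq_id, id, smul_eq_mul]
    field_simp
  · have := ℓ₀.le_opNorm x
    rw [hℓ₀, one_mul, Real.norm_eq_abs] at this
    rw [smul_apply, smul_eq_mul, abs_mul, abs_inv, abs_of_pos hM, inv_mul_eq_div]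
    exact div_le_div_of_nonneg_right this hM.le

namespace NoIterativeRoot

def ramp (a : ℝ) : ℝ := max 0 (min 1 a)

@[fun_prop]
lemma continuous_ramp : Continuous ramp := by unfold ramp; fun_prop

lemma ramp_of_nonpos {a : ℝ} (h : a ≤ 0) : ramp a = 0 := max_eq_left (min_le_of_right_le h)

lemma ramp_of_one_le {a : ℝ} (h : 1 ≤ a) : ramp a = 1 := by simp [ramp, h]

lemma ramp_mem_Icc (a : ℝ) : ramp a ∈ Icc 0 1 :=
  ⟨le_max_left _ _, max_le zero_le_one (min_le_left _ _)⟩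

/-- For `|s| ≥ 9` this is `s ∓ 10`, plus a tent on `[40, 55]` with `profile 50 = 50`;
also `profile 60 = 50` and `profile 70 = 60`. -/
def profile (s : ℝ) : ℝ := s - 10 * max (-1) (min 1 s) + max 0 (min (s - 40) (110 - 2 * s))

@[fun_prop]
lemma continuous_profile : Continuous profile := by unfold profile; fun_prop

lemma profile_eq_sub_ten {s : ℝ} (h₁ : 9 ≤ s) (h₂ : s ≤ 40) : profile s = s - 10 := by
  simp only [profile, max_def, min_def]; split_ifs <;> linarith

lemma profile_eq_add_ten {s : ℝ} (h : s ≤ -9) : profile s = s + 10 := by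
  simp only [profile, max_def, min_def]; split_ifs <;> linarith

lemma abs_profile_le_two {s : ℝ} (h₁ : 8 ≤ |s|) (h₂ : |s| ≤ 9) : |profile s| ≤ 2 := by
  rw [abs_le]; rw [le_abs'] at h₁; rw [abs_le] at h₂
  rcases h₁ with h₁ | h₁ <;> simp only [profile, max_def, min_def] <;> split_ifs <;>
    constructor <;> linarith

lemma abs_ramp_mul_profile_le {s : ℝ} (h : |s| ≤ 9) : |ramp (|s| - 8) * profile s| ≤ 2 := by
  rcases le_or_gt (|s|) 8 with h8 | h8
  · simp [ramp_of_nonpos (sub_nonpos.2 h8)]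
  obtain ⟨h0, h1⟩ := ramp_mem_Icc (|s| - 8)
  rw [abs_mul, abs_of_nonneg h0]
  nlinarith [abs_nonneg (profile s), abs_profile_le_two h8.le h]

lemma eq_of_profile_eq_fifty {s : ℝ} (h : profile s = 50) : s = 50 ∨ s = 60 := by
  simp only [profile, max_def, min_def] at h
  split_ifs at h <;> first | (left; linarith) | (right; linarith)

lemma eq_of_profile_eq_sixty {s : ℝ} (h : profile s = 60) : s = 70 := by
  simp only [profile, max_def, min_def] at h; split_ifs at h <;> linarith

lemma eq_of_profile_eq_self {s : ℝ} (h : profile s = s) : s = 0 ∨ s = 50 := by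
  simp only [profile, max_def, min_def] at h
  split_ifs at h <;> first | (left; linarith) | (right; linarith)

section Extension

variable {E : Type*} [AddCommGroup E] [Module ℝ E] [TopologicalSpace E]

noncomputable def extension (ℓ : E →L[ℝ] ℝ) (e : E) (κ : E → E) (x : E) : E :=
  κ x + ramp (|ℓ x| - 8) • (profile (ℓ x) • e + (2⁻¹ : ℝ) • (x - ℓ x • e))

variable {ℓ : E →L[ℝ] ℝ} {e : E} {κ : E → E}

lemma continuous_extension [IsTopologicalAddGroup E] [ContinuousSMul ℝ E] (hκ : Continuous κ) :
    Continuous (extension ℓ e κ) := by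
  unfold extension
  fun_prop

lemma apply_sub_smul_self (he : ℓ e = 1) (x : E) : ℓ (x - ℓ x • e) = 0 := by simp [he]

lemma eq_of_smul_add_eq (he : ℓ e = 1) {a b : ℝ} {w w' : E} (hw : ℓ w = 0) (hw' : ℓ w' = 0)
    (h : a • e + w = b • e + w') : a = b ∧ w = w' := by
  have hab : a = b := by simpa [he, hw, hw'] using congrArg ℓ h
  exact ⟨hab, by simpa [hab] using h⟩

lemma extension_of_abs_le_eight {x : E} (hx : |ℓ x| ≤ 8) : extension ℓ e κ x = κ x := by
  simp [extension, ramp_of_nonpos (sub_nonpos.2 hx)]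

lemma extension_of_nine_le_abs (hκ : ∀ x, 8 < |ℓ x| → κ x = 0) {x : E} (hx : 9 ≤ |ℓ x|) :
    extension ℓ e κ x = profile (ℓ x) • e + (2⁻¹ : ℝ) • (x - ℓ x • e) := by
  simp [extension, hκ x (by linarith), ramp_of_one_le (by linarith : 1 ≤ |ℓ x| - 8)]

lemma extension_smul_add (he : ℓ e = 1) (hκ : ∀ x, 8 < |ℓ x| → κ x = 0) {t : ℝ} {w : E}
    (hw : ℓ w = 0) (ht : 9 ≤ |t|) :
    extension ℓ e κ (t • e + w) = profile t • e + (2⁻¹ : ℝ) • w := by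
  have hℓ : ℓ (t • e + w) = t := by simp [he, hw]
  rw [extension_of_nine_le_abs hκ (by rwa [hℓ]), hℓ, add_sub_cancel_left]

lemma apply_extension (he : ℓ e = 1) (x : E) :
    ℓ (extension ℓ e κ x) = ℓ (κ x) + ramp (|ℓ x| - 8) * profile (ℓ x) := by
  simp [extension, he]

lemma abs_apply_extension_le (he : ℓ e = 1) (hκ : ∀ x, |ℓ (κ x)| ≤ 1) {x : E} (hx : |ℓ x| ≤ 9) :
    |ℓ (extension ℓ e κ x)| ≤ 3 := by
  rw [apply_extension he]
  linarith [abs_add_le (ℓ (κ x)) (ramp (|ℓ x| - 8) * profile (ℓ x)), hκ x,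
    abs_ramp_mul_profile_le hx]

lemma eq_smul_of_extension_eq_smul (he : ℓ e = 1) (hκ₀ : ∀ x, 8 < |ℓ x| → κ x = 0)
    (hκ₁ : ∀ x, |ℓ (κ x)| ≤ 1) {c : ℝ} (hc : 4 ≤ c) {z : E} (hz : extension ℓ e κ z = c • e) :
    profile (ℓ z) = c ∧ z = ℓ z • e := by
  have hs : 9 ≤ |ℓ z| := by
    by_contra! hs
    have := abs_apply_extension_le he hκ₁ hs.le
    rw [hz, map_smul, he, smul_eq_mul, mul_one, abs_of_nonneg (by linarith)] at this
    linarith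
  rw [extension_of_nine_le_abs hκ₀ hs, ← add_zero (c • e)] at hz
  obtain ⟨hprofile, hw⟩ := eq_of_smul_add_eq he
    (by rw [map_smul, apply_sub_smul_self he, smul_zero]) (map_zero ℓ) hz
  exact ⟨hprofile, sub_eq_zero.1 (by simpa using hw)⟩

lemma abs_apply_le_one_of_extension_eq_self (he : ℓ e = 1) (hκ₀ : ∀ x, 8 < |ℓ x| → κ x = 0)
    (hκ₁ : ∀ x, |ℓ (κ x)| ≤ 1) {q : E} (hq : extension ℓ e κ q = q) (hq₅₀ : q ≠ (50 : ℝ) • e) :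
    |ℓ q| ≤ 1 := by
  rcases le_or_gt |ℓ q| 9 with hs | hs
  · have h₃ := abs_apply_extension_le he hκ₁ hs
    rw [hq] at h₃
    rw [← hq, extension_of_abs_le_eight (by linarith)]
    exact hκ₁ q
  · rw [extension_of_nine_le_abs hκ₀ hs.le] at hq
    conv_rhs at hq => rw [← add_sub_cancel (ℓ q • e) q]
    obtain ⟨hprofile, hw⟩ := eq_of_smul_add_eq he
      (by rw [map_smul, apply_sub_smul_self he, smul_zero]) (apply_sub_smul_self he q) hq
    have hw₀ : q - ℓ q • e = 0 := by linear_combination (norm := module) (-2 : ℝ) • hw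
    rcases eq_of_profile_eq_self hprofile with h₀ | h₅₀
    · rw [h₀, abs_zero] at hs
      norm_num at hs
    · exact absurd (by rw [← h₅₀]; exact sub_eq_zero.1 hw₀) hq₅₀

lemma exists_preimage_chains (he : ℓ e = 1) (hκ₀ : ∀ x, 8 < |ℓ x| → κ x = 0) {q : E}
    (hq : |ℓ q| ≤ 1) :
    ∃ v₁ v₂ u₁ u₂, extension ℓ e κ v₁ = q ∧ extension ℓ e κ v₂ = q ∧
      extension ℓ e κ u₁ = v₁ ∧ extension ℓ e κ u₂ = v₂ ∧ v₁ ≠ v₂ ∧ v₁ ≠ q ∧ v₂ ≠ q := by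
  have hs := abs_le.1 hq
  set s := ℓ q
  set w := q - s • e
  have hw : ℓ w = 0 := apply_sub_smul_self he q
  have hq' : q = s • e + w := (add_sub_cancel _ _).symm
  have hℓ : ∀ t c : ℝ, ℓ (t • e + c • w) = t := fun t c => by simp [he, hw]
  have hsmul : ∀ c : ℝ, ℓ (c • w) = 0 := fun c => by simp [hw]
  -- `extension` halves the component in `ker ℓ`, so the preimages double it.
  refine ⟨(s + 10) • e + (2 : ℝ) • w, (s - 10) • e + (2 : ℝ) • w,
    (s + 20) • e + (4 : ℝ) • w, (s - 20) • e + (4 : ℝ) • w, ?_, ?_, ?_, ?_, ?_, ?_, ?_⟩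
  · rw [extension_smul_add he hκ₀ (hsmul 2) (by rw [abs_of_pos] <;> linarith),
      profile_eq_sub_ten (by linarith) (by linarith), hq']
    module
  · rw [extension_smul_add he hκ₀ (hsmul 2) (by rw [abs_of_neg] <;> linarith),
      profile_eq_add_ten (by linarith), hq']
    module
  · rw [extension_smul_add he hκ₀ (hsmul 4) (by rw [abs_of_pos] <;> linarith),
      profile_eq_sub_ten (by linarith) (by linarith)]
    module
  · rw [extension_smul_add he hκ₀ (hsmul 4) (by rw [abs_of_neg] <;> linarith),
      profile_eq_add_ten (by linarith)]
    module
  · intro h; have := hℓ (s + 10) 2 ▸ hℓ (s - 10) 2 ▸ congrArg ℓ h; linarith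
  · intro h; have := hℓ (s + 10) 2 ▸ congrArg ℓ h; linarith
  · intro h; have := hℓ (s - 10) 2 ▸ congrArg ℓ h; linarith

theorem extension_iterate_ne (he : ℓ e = 1) (hκ₀ : ∀ x, 8 < |ℓ x| → κ x = 0)
    (hκ₁ : ∀ x, |ℓ (κ x)| ≤ 1) {n : ℕ} (hn : 2 ≤ n) (g : E → E) :
    g^[n] ≠ extension ℓ e κ := by
  have hFe : ∀ {t : ℝ}, 9 ≤ |t| → extension ℓ e κ (t • e) = profile t • e := fun ht => by
    simpa using extension_smul_add he hκ₀ (map_zero ℓ) ht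
  have hne : ∀ {a b : ℝ}, a ≠ b → a • e ≠ b • e := fun hab h =>
    hab (by simpa [he] using congrArg ℓ h)
  refine iterate_ne_of_fixedPt_preimages (p := (50 : ℝ) • e) (x₁ := (60 : ℝ) • e)
    (x₂ := (70 : ℝ) • e) ?_ ?_ ?_ (hne (by norm_num)) ?_ ?_ ?_ hn g
  · rw [hFe (by norm_num [abs_of_pos])]; norm_num [profile]
  · rw [hFe (by norm_num [abs_of_pos])]; norm_num [profile]
  · rw [hFe (by norm_num [abs_of_pos])]; norm_num [profile]
  · intro z hz
    obtain ⟨hprofile, hz⟩ := eq_smul_of_extension_eq_smul he hκ₀ hκ₁ (by norm_num) hz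
    rw [hz]
    rcases eq_of_profile_eq_fifty hprofile with h | h <;> rw [h] <;> simp
  · intro z hz
    obtain ⟨hprofile, hz⟩ := eq_smul_of_extension_eq_smul he hκ₀ hκ₁ (by norm_num) hz
    rw [hz, eq_of_profile_eq_sixty hprofile]
  · intro q hq hq₅₀
    exact exists_preimage_chains he hκ₀ (abs_apply_le_one_of_extension_eq_self he hκ₀ hκ₁ hq hq₅₀)

end Extension

theorem exists_continuous_eqOn_forall_iterate_ne {E : Type*} [NormedAddCommGroup E]
    [NormedSpace ℝ E] [ProperSpace E] [Nontrivial E] {h : E → E} (hh : Continuous h)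
    {K : Set E} (hK : IsCompact K) :
    ∃ f : E → E, Continuous f ∧ EqOn f h K ∧ ∀ n, 2 ≤ n → ∀ g : E → E, g^[n] ≠ f := by
  obtain ⟨ρ, hρ, hKρ⟩ := hK.isBounded.subset_closedBall_lt 0 (0 : E)
  obtain ⟨C, hC⟩ :=
    (isCompact_closedBall (0 : E) (ρ + 1)).exists_bound_of_continuousOn hh.continuousOn
  set M := max (ρ + 1) C
  have hM : 0 < M := lt_max_of_lt_left (by linarith)
  -- Scaling by `M` squeezes the ball of radius `ρ + 1` and the bound `C` into `|ℓ x| ≤ 1`.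
  obtain ⟨ℓ, e, he, hℓ⟩ := exists_dual_apply_eq_one_abs_apply_le (E := E) hM
  set κ : E → E := fun x => ramp (ρ + 1 - ‖x‖) • h x
  have hκ_out : ∀ x, ρ + 1 ≤ ‖x‖ → κ x = 0 := fun x hx => by
    simp [κ, ramp_of_nonpos (by linarith : ρ + 1 - ‖x‖ ≤ 0)]
  have hκ₀ : ∀ x, 8 < |ℓ x| → κ x = 0 := fun x hx => hκ_out x <| by
    by_contra! hx'
    have := (hℓ x).trans ((div_le_one hM).2 (hx'.le.trans (le_max_left _ _)))
    linarith
  have hκ₁ : ∀ x, |ℓ (κ x)| ≤ 1 := fun x => by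
    rcases le_or_gt (ρ + 1) ‖x‖ with hx | hx
    · simp [hκ_out x hx]
    refine (hℓ (κ x)).trans ((div_le_one hM).2 ?_)
    obtain ⟨h₀, h₁⟩ := ramp_mem_Icc (ρ + 1 - ‖x‖)
    calc ‖κ x‖ = ramp (ρ + 1 - ‖x‖) * ‖h x‖ := by simp [κ, norm_smul, abs_of_nonneg h₀]
      _ ≤ 1 * C := by
        gcongr
        exact hC x (mem_closedBall_zero_iff.2 hx.le)
      _ ≤ M := by rw [one_mul]; exact le_max_right _ _
  refine ⟨extension ℓ e κ, continuous_extension (by fun_prop), fun x hx => ?_,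
    fun n hn g => extension_iterate_ne he hκ₀ hκ₁ hn g⟩
  have hxρ : ‖x‖ ≤ ρ := mem_closedBall_zero_iff.1 (hKρ hx)
  have hxM : ‖x‖ / M ≤ 1 := (div_le_one hM).2 (by linarith [le_max_left (ρ + 1) C])
  rw [extension_of_abs_le_eight ((hℓ x).trans (by linarith))]
  simp [κ, ramp_of_one_le (by linarith : 1 ≤ ρ + 1 - ‖x‖)]

end NoIterativeRoot

theorem exists_mem_forall_iterate_ne {E : Type*} [NormedAddCommGroup E] [NormedSpace ℝ E]
    [ProperSpace E] [Nontrivial E] {U : Set C(E, E)} (hU : IsOpen U) (hne : U.Nonempty) :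
    ∃ f ∈ U, ∀ n, 2 ≤ n → ∀ g : E → E, g^[n] ≠ f := by
  obtain ⟨h, hhU⟩ := hne
  obtain ⟨K, hK, hKU⟩ := ContinuousMap.exists_isCompact_forall_eqOn_mem (hU.mem_nhds hhU)
  obtain ⟨f, hf, hfh, hroots⟩ :=
    NoIterativeRoot.exists_continuous_eqOn_forall_iterate_ne h.continuous hK
  exact ⟨⟨f, hf⟩, hKU _ hfh, hroots⟩

theorem euclidean_open_set_contains_map_without_roots (m : ℕ) (hm : 1 ≤ m)
    (U : Set C(Fin m → ℝ, Fin m → ℝ)) (hU : IsOpen U) (hUne : U.Nonempty) :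
    ∃ f ∈ U, ∀ n : ℕ, 2 ≤ n →
      ¬ ∃ g : (Fin m → ℝ) → (Fin m → ℝ), g^[n] = ⇑f := by
  have : Nonempty (Fin m) := ⟨⟨0, hm⟩⟩
  obtain ⟨f, hfU, hf⟩ := exists_mem_forall_iterate_ne hU hUne
  exact ⟨f, hfU, fun n hn ⟨g, hg⟩ => hf n hn g hg⟩
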